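/- arXiv:2410.02228 — 5 statements merged into one kernel-verified Lean document; each statement's English description precedes it below -/
import Mathlib

section
/- Let n ≥ 1, let M be a positive semidefinite complex matrix indexed by pairs (Fin n × Fin n) (i.e., an n²×n² matrix acting on ℂⁿ ⊗ ℂⁿ), and let α ≥ 0. Suppose that for all unit vectors e, f ∈ ℂⁿ, the quadratic form of M at the Kronecker product e ⊗ f is at most α, i.e. (e ⊗ f)ᴴ M (e ⊗ f) ≤ α (this quantity is a nonnegative real since M is positive semidefinite). Then for every unit vector ψ ∈ ℂⁿ ⊗ ℂⁿ (equivalently, ψ : Fin n × Fin n → ℂ with ‖ψ‖ = 1), one has ψᴴ M ψ ≤ α · n²; in particular every eigenvalue of M, and hence λ_max(M), is at most α · n². -/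
open Matrix
open scoped ComplexOrder

/-! Testing `M` on products of standard basis vectors bounds its diagonal by `α`. Since the
`2 × 2` principal minors of a positive semidefinite matrix are nonnegative, every entry then
satisfies `‖M p q‖ ≤ α`, so `ψᴴ M ψ ≤ α (∑ ‖ψ p‖)² ≤ α n² ∑ ‖ψ p‖²` by Cauchy–Schwarz. -/

theorem Pi.single_one_mul_single_one {α β R : Type*} [DecidableEq α] [DecidableEq β]
    [MulZeroOneClass R] (i : α) (j : β) :
    (fun p : α × β => (Pi.single i 1 : α → R) p.1 * (Pi.single j 1 : β → R) p.2) =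
      Pi.single (i, j) 1 := by
  ext ⟨a, b⟩
  by_cases ha : a = i <;> by_cases hb : b = j <;> simp [ha, hb]

section

variable {𝕜 ι : Type*} [RCLike 𝕜]

theorem sum_norm_single_one_sq [Fintype ι] [DecidableEq ι] (i : ι) :
    ∑ j, ‖(Pi.single i 1 : ι → 𝕜) j‖ ^ 2 = 1 := by
  rw [Fintype.sum_eq_single i fun j hj => by simp [hj]]
  simp

theorem Matrix.star_single_one_dotProduct_mulVec_single_one [Fintype ι] [DecidableEq ι]
    (A : Matrix ι ι 𝕜) (i : ι) :
    star (Pi.single i 1 : ι → 𝕜) ⬝ᵥ A *ᵥ Pi.single i 1 = A i i := by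
  simp [Pi.star_single, single_dotProduct]

theorem Matrix.re_dotProduct_le_of_norm_apply_le [Fintype ι] {A : Matrix ι ι 𝕜} {α : ℝ}
    (hA : ∀ i j, ‖A i j‖ ≤ α) (x : ι → 𝕜) :
    RCLike.re (star x ⬝ᵥ A *ᵥ x) ≤ α * (∑ i, ‖x i‖) ^ 2 := by
  have hexpand : star x ⬝ᵥ A *ᵥ x = ∑ i, ∑ j, star (x i) * A i j * x j := by
    simp only [dotProduct, mulVec, Pi.star_apply, Finset.mul_sum, mul_assoc]
  calc RCLike.re (star x ⬝ᵥ A *ᵥ x)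
      ≤ ‖star x ⬝ᵥ A *ᵥ x‖ := RCLike.re_le_norm _
    _ ≤ ∑ i, ∑ j, ‖x i‖ * α * ‖x j‖ := by
        rw [hexpand]
        refine (norm_sum_le _ _).trans (Finset.sum_le_sum fun i _ => ?_)
        refine (norm_sum_le _ _).trans (Finset.sum_le_sum fun j _ => ?_)
        rw [norm_mul, norm_mul, norm_star]
        gcongr
        exact hA i j
    _ = α * (∑ i, ‖x i‖) ^ 2 := by
        simp_rw [sq, Finset.sum_mul_sum, Finset.mul_sum]
        exact Finset.sum_congr rfl fun i _ => Finset.sum_congr rfl fun j _ => by ring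

namespace Matrix.PosSemidef

variable {A : Matrix ι ι 𝕜}

theorem norm_apply_sq_le (hA : A.PosSemidef) (i j : ι) :
    ‖A i j‖ ^ 2 ≤ RCLike.re (A i i) * RCLike.re (A j j) := by
  have hdet := (hA.submatrix ![i, j]).det_nonneg
  have hji : A j i = star (A i j) := by rw [← hA.isHermitian.apply i j]; simp
  have hii := (RCLike.nonneg_iff.mp (hA.diag_nonneg (i := i))).2
  simp only [det_fin_two, submatrix_apply, cons_val_zero, cons_val_one, hji,
    RCLike.star_def, RCLike.mul_conj] at hdet
  have := (RCLike.nonneg_iff.mp hdet).1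
  simp only [map_sub, RCLike.mul_re, hii] at this
  norm_cast at this
  simpa [sub_nonneg] using this

theorem norm_apply_le_of_re_diag_le (hA : A.PosSemidef) {α : ℝ}
    (hdiag : ∀ i, RCLike.re (A i i) ≤ α) (i j : ι) : ‖A i j‖ ≤ α := by
  have hre_nonneg : ∀ k, 0 ≤ RCLike.re (A k k) := fun k =>
    (RCLike.nonneg_iff.mp hA.diag_nonneg).1
  have hα : 0 ≤ α := (hre_nonneg i).trans (hdiag i)
  rw [← pow_le_pow_iff_left₀ (norm_nonneg _) hα two_ne_zero]
  calc ‖A i j‖ ^ 2 ≤ RCLike.re (A i i) * RCLike.re (A j j) := hA.norm_apply_sq_le i j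
    _ ≤ α ^ 2 := by rw [sq]; exact mul_le_mul (hdiag i) (hdiag j) (hre_nonneg j) hα

theorem re_dotProduct_le_of_re_diag_le [Fintype ι] (hA : A.PosSemidef) {α : ℝ} (hα : 0 ≤ α)
    (hdiag : ∀ i, RCLike.re (A i i) ≤ α) (x : ι → 𝕜) :
    RCLike.re (star x ⬝ᵥ A *ᵥ x) ≤ α * Fintype.card ι * ∑ i, ‖x i‖ ^ 2 := by
  calc RCLike.re (star x ⬝ᵥ A *ᵥ x)
      ≤ α * (∑ i, ‖x i‖) ^ 2 :=
        re_dotProduct_le_of_norm_apply_le (hA.norm_apply_le_of_re_diag_le hdiag) x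
    _ ≤ α * (Fintype.card ι * ∑ i, ‖x i‖ ^ 2) := by
        gcongr
        exact sq_sum_le_card_mul_sum_sq
    _ = α * Fintype.card ι * ∑ i, ‖x i‖ ^ 2 := by ring

end Matrix.PosSemidef

theorem Matrix.IsHermitian.eigenvalues_le [Fintype ι] [DecidableEq ι] {A : Matrix ι ι 𝕜}
    (hA : A.IsHermitian) {c : ℝ}
    (h : ∀ x : ι → 𝕜, ∑ i, ‖x i‖ ^ 2 = 1 → RCLike.re (star x ⬝ᵥ A *ᵥ x) ≤ c) (i : ι) :
    hA.eigenvalues i ≤ c := by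
  rw [hA.eigenvalues_eq]
  refine h _ ?_
  rw [← PiLp.norm_sq_eq_of_L2, hA.eigenvectorBasis.orthonormal.1 i, one_pow]

end

theorem psd_product_bound_implies_global_bound_general
    (n : ℕ)
    (M : Matrix (Fin n × Fin n) (Fin n × Fin n) ℂ) (hM : M.PosSemidef)
    (α : ℝ) (hα : 0 ≤ α)
    (hprod : ∀ e f : Fin n → ℂ,
      (∑ i, ‖e i‖ ^ 2) = 1 → (∑ i, ‖f i‖ ^ 2) = 1 →
      (star (fun p : Fin n × Fin n => e p.1 * f p.2) ⬝ᵥ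
        M *ᵥ (fun p : Fin n × Fin n => e p.1 * f p.2)).re ≤ α) :
    (∀ ψ : Fin n × Fin n → ℂ, (∑ p, ‖ψ p‖ ^ 2) = 1 →
      (star ψ ⬝ᵥ M *ᵥ ψ).re ≤ α * (n : ℝ) ^ 2) ∧
    (∀ i : Fin n × Fin n, hM.isHermitian.eigenvalues i ≤ α * (n : ℝ) ^ 2) := by
  have hdiag : ∀ p, (M p p).re ≤ α := fun ⟨i, j⟩ => by
    simpa only [Pi.single_one_mul_single_one, star_single_one_dotProduct_mulVec_single_one] using
      hprod (Pi.single i 1) (Pi.single j 1) (sum_norm_single_one_sq i) (sum_norm_single_one_sq j)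
  have hglobal : ∀ ψ : Fin n × Fin n → ℂ, (∑ p, ‖ψ p‖ ^ 2) = 1 →
      (star ψ ⬝ᵥ M *ᵥ ψ).re ≤ α * (n : ℝ) ^ 2 := fun ψ hψ => by
    have := hM.re_dotProduct_le_of_re_diag_le hα hdiag ψ
    rwa [hψ, mul_one, Fintype.card_prod, Fintype.card_fin, Nat.cast_mul, ← sq] at this
  exact ⟨hglobal, hM.isHermitian.eigenvalues_le hglobal⟩

/-- **Lemma (useful).** If `M` is a positive semidefinite `n² × n²` complex matrix whose
quadratic form on all product unit vectors `e ⊗ f` is at most `α`, then its quadratic form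
on every unit vector of `ℂⁿ ⊗ ℂⁿ` is at most `α · n²`; in particular every eigenvalue of `M`
(hence `λ_max(M)`) is at most `α · n²`. -/
theorem psd_product_bound_implies_global_bound
    (n : ℕ) (hn : 1 ≤ n)
    (M : Matrix (Fin n × Fin n) (Fin n × Fin n) ℂ) (hM : M.PosSemidef)
    (α : ℝ) (hα : 0 ≤ α)
    (hprod : ∀ e f : Fin n → ℂ,
      (∑ i, ‖e i‖ ^ 2) = 1 → (∑ i, ‖f i‖ ^ 2) = 1 →
      (star (fun p : Fin n × Fin n => e p.1 * f p.2) ⬝ᵥ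
        M *ᵥ (fun p : Fin n × Fin n => e p.1 * f p.2)).re ≤ α) :
    (∀ ψ : Fin n × Fin n → ℂ, (∑ p, ‖ψ p‖ ^ 2) = 1 →
      (star ψ ⬝ᵥ M *ᵥ ψ).re ≤ α * (n : ℝ) ^ 2) ∧
    (∀ i : Fin n × Fin n, hM.isHermitian.eigenvalues i ≤ α * (n : ℝ) ^ 2) :=
  psd_product_bound_implies_global_bound_general n M hM α hα hprod
end

section
/- Let n : ℕ and let G = (Fin n → ZMod 2) denote 𝔽₂ⁿ with the bilinear form ⟨x,y⟩ = Σᵢ xᵢyᵢ ∈ ZMod 2. Let H denote the n-qubit Hadamard transform on functions ψ : G → ℂ, defined by (Hψ)(y) = 2^{−n/2} Σ_{x∈G} χ(⟨x,y⟩) ψ(x), where χ(0) = 1 and χ(1) = −1. For every ZMod 2-submodule A of G, the Hadamard transform maps the subspace state of A to the subspace state of its dual: H |A⟩ = |A^⊥⟩, where |A⟩ : G → ℂ takes the value (card A)^{−1/2} on elements of A and 0 elsewhere, and A^⊥ = {y ∈ G : ⟨x,y⟩ = 0 for all x ∈ A}. -/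
/-- The character `χ : ZMod 2 → ℂ` with `χ(0) = 1` and `χ(1) = -1`. -/
def chi (b : ZMod 2) : ℂ := if b = 0 then 1 else -1

/-- The bilinear form `⟨x, y⟩ = ∑ i, xᵢ yᵢ` on `𝔽₂ⁿ`. -/
def bform {n : ℕ} (x y : Fin n → ZMod 2) : ZMod 2 := ∑ i, x i * y i

/-- The `n`-qubit Hadamard transform:
`(Hψ)(y) = 2^(−n/2) ∑ₓ χ(⟨x,y⟩) ψ(x)`. -/
noncomputable def Had (n : ℕ) (ψ : (Fin n → ZMod 2) → ℂ) : (Fin n → ZMod 2) → ℂ :=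
  fun y => (((Real.sqrt (2 ^ n))⁻¹ : ℝ) : ℂ) * ∑ x, chi (bform x y) * ψ x

/-- The subspace state `|S⟩`, taking the value `(card S)^(−1/2)` on elements of `S` and
`0` elsewhere. -/
noncomputable def subspaceState (n : ℕ) (S : Set (Fin n → ZMod 2)) :
    (Fin n → ZMod 2) → ℂ :=
  S.indicator fun _ => (((Real.sqrt (Nat.card S))⁻¹ : ℝ) : ℂ)

/-!
Summing the character `χ(⟨x, y⟩)` over `x ∈ A` gives `|A|` when `y ∈ A^⊥` and `0` otherwise
(orthogonality of characters: a nontrivial character of a finite group sums to zero). Hence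
`H|A⟩` is supported on `A^⊥`, where it equals `|A| / √(2ⁿ |A|)`. Evaluating the double sum
`∑_y ∑_{x ∈ A} χ(⟨x, y⟩)` in the other order gives `2ⁿ`, since `y ↦ ⟨x, y⟩` vanishes identically
only for `x = 0`; so `|A| |A^⊥| = 2ⁿ`, and that value is `|A^⊥|^(-1/2)`.
-/

lemma chi_eq_one_iff {b : ZMod 2} : chi b = 1 ↔ b = 0 := by
  fin_cases b <;> norm_num [chi]

def chiAddChar : AddChar (ZMod 2) ℂ where
  toFun := chi
  map_zero_eq_one' := by simp [chi]
  map_add_eq_mul' a b := by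
    have h : a + b = 0 ↔ (a = 0 ↔ b = 0) := by revert a b; decide
    by_cases ha : a = 0 <;> by_cases hb : b = 0 <;> simp [chi, h, ha, hb]

lemma sum_chi_comp_eq_ite {M : Type*} [AddGroup M] [Fintype M] (f : M →+ ZMod 2)
    [Decidable (f = 0)] :
    ∑ m, chi (f m) = if f = 0 then (Fintype.card M : ℂ) else 0 := by
  classical
  have hψ : chiAddChar.compAddMonoidHom f = 0 ↔ f = 0 := by
    rw [AddChar.eq_zero_iff, DFunLike.ext_iff]
    exact forall_congr' fun _ => chi_eq_one_iff
  have := (chiAddChar.compAddMonoidHom f).sum_eq_ite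
  simp only [hψ] at this
  exact this

def bformOrthogonal {n : ℕ} (A : Set (Fin n → ZMod 2)) : Set (Fin n → ZMod 2) :=
  {y | ∀ x ∈ A, bform x y = 0}

lemma bform_single_one {n : ℕ} (x : Fin n → ZMod 2) (i : Fin n) :
    bform x (Pi.single i 1) = x i :=
  (dotProduct_single x 1 i).trans (mul_one _)

section
open Classical

lemma sum_chi_bform_submodule {n : ℕ} (A : Submodule (ZMod 2) (Fin n → ZMod 2))
    (y : Fin n → ZMod 2) :
    ∑ x : A, chi (bform (x : Fin n → ZMod 2) y)
      = if y ∈ bformOrthogonal A then (Nat.card A : ℂ) else 0 := by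
  let f := (AddMonoidHom.mk' (bform · y) fun a b => add_dotProduct a b y).comp
    A.subtype.toAddMonoidHom
  have hf : f = 0 ↔ y ∈ bformOrthogonal A :=
    (DFunLike.ext_iff (f := f) (g := 0)).trans ⟨fun h x hx => h ⟨x, hx⟩, fun h x => h x x.2⟩
  refine (sum_chi_comp_eq_ite f).trans ?_
  rw [Nat.card_eq_fintype_card, if_congr hf rfl rfl]

lemma sum_chi_bform_left {n : ℕ} (x : Fin n → ZMod 2) :
    ∑ y, chi (bform x y) = if x = 0 then (2 ^ n : ℂ) else 0 := by
  let f := AddMonoidHom.mk' (bform x) fun a b => dotProduct_add x a b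
  have hf : f = 0 ↔ x = 0 := by
    refine ⟨fun h => funext fun i => ?_, fun h => ?_⟩
    · rw [← bform_single_one x i]
      exact DFunLike.congr_fun h (Pi.single i 1)
    · subst h
      exact AddMonoidHom.ext (zero_dotProduct (α := ZMod 2))
  refine (sum_chi_comp_eq_ite f).trans ?_
  rw [if_congr hf rfl rfl, Fintype.card_fun, ZMod.card, Fintype.card_fin]
  norm_cast

lemma card_mul_card_bformOrthogonal {n : ℕ} (A : Submodule (ZMod 2) (Fin n → ZMod 2)) :
    Nat.card A * Nat.card (bformOrthogonal (A : Set (Fin n → ZMod 2))) = 2 ^ n := by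
  have hsum_perp : ∑ y, ∑ x : A, chi (bform (x : Fin n → ZMod 2) y)
      = (Nat.card A * Nat.card (bformOrthogonal (A : Set (Fin n → ZMod 2))) : ℂ) := by
    simp only [sum_chi_bform_submodule, Finset.sum_ite, Finset.sum_const_zero, add_zero,
      Finset.sum_const, nsmul_eq_mul, mul_comm, Nat.card_eq_fintype_card, Fintype.card_subtype]
  have hsum_zero : ∑ y, ∑ x : A, chi (bform (x : Fin n → ZMod 2) y) = (2 ^ n : ℂ) := by
    simp [Finset.sum_comm (γ := Fin n → ZMod 2), sum_chi_bform_left]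
  exact_mod_cast hsum_perp.symm.trans hsum_zero

lemma Had_indicator_apply {n : ℕ} (S : Set (Fin n → ZMod 2)) (c : ℂ) (y : Fin n → ZMod 2) :
    Had n (S.indicator fun _ => c) y
      = ((√(2 ^ n))⁻¹ : ℝ) * ((∑ x : S, chi (bform (x : Fin n → ZMod 2) y)) * c) := by
  simp only [Had, Finset.sum_mul, Set.indicator_apply, mul_ite, mul_zero, Finset.sum_ite,
    Finset.sum_const_zero, add_zero]
  congr 1
  exact Finset.sum_subtype _ (by simp) _

end

lemma inv_sqrt_mul_mul_div_sqrt {a b : ℝ} (ha : 0 < a) :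
    (√(a * b))⁻¹ * (a / √a) = (√b)⁻¹ := by
  rw [Real.sqrt_mul ha.le, Real.div_sqrt, mul_inv, mul_right_comm,
    inv_mul_cancel₀ (by positivity), one_mul]

/-- **Completeness identity.** The Hadamard transform maps the subspace state of a
`ZMod 2`-submodule `A ≤ 𝔽₂ⁿ` to the subspace state of its dual: `H|A⟩ = |A^⊥⟩`. -/
theorem hadamard_subspace_state_eq_dual
    (n : ℕ) (A : Submodule (ZMod 2) (Fin n → ZMod 2)) :
    Had n (subspaceState n (A : Set (Fin n → ZMod 2)))
      = subspaceState n {y | ∀ x ∈ (A : Set (Fin n → ZMod 2)), bform x y = 0} := by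
  funext y
  change _ = subspaceState n (bformOrthogonal A) y
  rw [subspaceState, subspaceState, Had_indicator_apply]
  simp only [SetLike.coe_sort_coe]
  rw [sum_chi_bform_submodule]
  by_cases hy : y ∈ bformOrthogonal A
  · have hA : (0 : ℝ) < Nat.card A := by exact_mod_cast Nat.card_pos
    have hvalue := inv_sqrt_mul_mul_div_sqrt
      (b := Nat.card (bformOrthogonal (A : Set (Fin n → ZMod 2)))) hA
    rw [← Nat.cast_mul, card_mul_card_bformOrthogonal] at hvalue
    rw [if_pos hy, Set.indicator_of_mem hy, ← hvalue]
    push_cast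
    ring
  · rw [if_neg hy, Set.indicator_of_notMem hy, zero_mul, mul_zero]
end

section
/- Let n : ℕ and G = (Fin n → ZMod 2). Let A be a ZMod 2-submodule of G, let S be any finite subset of G, and let ψ : G → ℂ satisfy ψ(x) = 0 for all x ∉ A and Σ_{x∈G} |ψ(x)|² = 1. Then the total Hadamard-transformed mass on S satisfies Σ_{y∈S} |(Hψ)(y)|² ≤ (card A) · (card S) / 2ⁿ, where (Hψ)(y) = 2^{−n/2} Σ_{x∈G} χ(⟨x,y⟩) ψ(x). -/
lemma chi_norm (b : ZMod 2) : ‖chi b‖ = 1 := by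
  unfold chi; split <;> simp

/-- **Summed Fourier mass bound.** If `ψ` is a unit vector supported on a
`ZMod 2`-submodule `A ≤ 𝔽₂ⁿ`, then for any finite subset `S ⊆ 𝔽₂ⁿ`, the total
Hadamard-transformed mass on `S` satisfies `∑_{y ∈ S} |(Hψ)(y)|² ≤ |A| · |S| / 2ⁿ`. -/
theorem hadamard_mass_on_set_le
    (n : ℕ) (A : Submodule (ZMod 2) (Fin n → ZMod 2))
    (S : Finset (Fin n → ZMod 2))
    (ψ : (Fin n → ZMod 2) → ℂ)
    (hsupp : ∀ x, x ∉ A → ψ x = 0)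
    (hnorm : (∑ x, ‖ψ x‖ ^ 2) = 1) :
    ∑ y ∈ S, ‖Had n ψ y‖ ^ 2 ≤ (Nat.card A : ℝ) * (S.card : ℝ) / 2 ^ n := by
  have key : ∀ y, ‖Had n ψ y‖ ^ 2 ≤ (Nat.card A : ℝ) / 2 ^ n := by
    intro y
    classical
    set AF : Finset (Fin n → ZMod 2) := Set.toFinset (A : Set (Fin n → ZMod 2)) with hAF
    have hcard : (AF.card : ℝ) = (Nat.card A : ℝ) := by
      rw [hAF, Set.toFinset_card, Nat.card_eq_fintype_card]
      norm_cast

    have hsum : (∑ x, chi (bform x y) * ψ x) = ∑ x ∈ AF, chi (bform x y) * ψ x := by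
      apply (Finset.sum_subset (Finset.subset_univ _) _).symm
      intro x _ hx
      rw [hsupp x (by simpa [hAF] using hx), mul_zero]
    have h1 : ‖∑ x ∈ AF, chi (bform x y) * ψ x‖ ≤ ∑ x ∈ AF, ‖ψ x‖ := by
      refine (norm_sum_le _ _).trans (le_of_eq ?_)
      exact Finset.sum_congr rfl fun x _ => by rw [norm_mul, chi_norm, one_mul]
    have h2 : (∑ x ∈ AF, ‖ψ x‖) ^ 2 ≤ (AF.card : ℝ) * ∑ x ∈ AF, ‖ψ x‖ ^ 2 := by
      exact sq_sum_le_card_mul_sum_sq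
    have h3 : (∑ x ∈ AF, ‖ψ x‖ ^ 2) ≤ 1 := by
      rw [← hnorm]
      exact Finset.sum_le_sum_of_subset_of_nonneg (Finset.subset_univ _)
        (fun _ _ _ => by positivity)
    have hHad : ‖Had n ψ y‖ ^ 2
        = (2 ^ n : ℝ)⁻¹ * ‖∑ x ∈ AF, chi (bform x y) * ψ x‖ ^ 2 := by
      rw [Had, ← hsum, norm_mul, mul_pow, Complex.norm_real, Real.norm_eq_abs,
        abs_of_nonneg (by positivity), ← Real.sqrt_inv, Real.sq_sqrt (by positivity)]
    rw [hHad, div_eq_inv_mul]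
    apply mul_le_mul_of_nonneg_left _ (by positivity)
    calc ‖∑ x ∈ AF, chi (bform x y) * ψ x‖ ^ 2
        ≤ (∑ x ∈ AF, ‖ψ x‖) ^ 2 := by
          apply pow_le_pow_left₀ (norm_nonneg _) h1 2
      _ ≤ (AF.card : ℝ) * ∑ x ∈ AF, ‖ψ x‖ ^ 2 := h2
      _ ≤ (AF.card : ℝ) * 1 := by
          apply mul_le_mul_of_nonneg_left h3 (by positivity)
      _ = (Nat.card A : ℝ) := by rw [mul_one, hcard]
  calc ∑ y ∈ S, ‖Had n ψ y‖ ^ 2 ≤ ∑ _y ∈ S, (Nat.card A : ℝ) / 2 ^ n :=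
        Finset.sum_le_sum fun y _ => key y
    _ = (S.card : ℝ) * ((Nat.card A : ℝ) / 2 ^ n) := by rw [Finset.sum_const, nsmul_eq_mul]
    _ = (Nat.card A : ℝ) * (S.card : ℝ) / 2 ^ n := by ring
end

section
/- Let n be divisible by 4, and let G = (Fin n → ZMod 2). Let A and B be ZMod 2-submodules of G with B ⊆ A^⊥, with A of dimension n/2 (card A = 2^{n/2}) and B of dimension n/4 (card B = 2^{n/4}). Then for every ψ : G → ℂ with ψ(x) = 0 for all x ∉ A and Σ_{x∈G} |ψ(x)|² = 1, the probability that measuring the Hadamard-transformed state yields an element of B satisfies Σ_{y∈B} |(Hψ)(y)|² ≤ 2^{−n/4}. -/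
/-- **Soundness estimate (Lemma honest-verification).** Let `4 ∣ n`, let `A, B ≤ 𝔽₂ⁿ` be
`ZMod 2`-submodules with `B ⊆ A^⊥`, `|A| = 2^(n/2)` and `|B| = 2^(n/4)`. Then any unit
state supported on `A`, after the Hadamard transform, has mass at most `2^(−n/4)` on `B`. -/
theorem hadamard_mass_on_dual_small_subspace_le
    (n : ℕ) (hn : 4 ∣ n)
    (A B : Submodule (ZMod 2) (Fin n → ZMod 2))
    (hBA : ∀ y ∈ B, ∀ x ∈ A, bform x y = 0)
    (hA : Nat.card A = 2 ^ (n / 2))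
    (hB : Nat.card B = 2 ^ (n / 4))
    (ψ : (Fin n → ZMod 2) → ℂ)
    (hsupp : ∀ x, x ∉ A → ψ x = 0)
    (hnorm : (∑ x, ‖ψ x‖ ^ 2) = 1) :
    ∑ y, (B : Set (Fin n → ZMod 2)).indicator (fun y => ‖Had n ψ y‖ ^ 2) y
      ≤ ((2 : ℝ) ^ (n / 4))⁻¹ := by
  classical
  obtain ⟨k, rfl⟩ := hn
  have h2 : 4 * k / 2 = 2 * k := by omega
  have h4 : 4 * k / 4 = k := by omega
  rw [h2] at hA
  rw [h4] at hB ⊢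
  set s : Finset (Fin (4*k) → ZMod 2) := Finset.univ.filter (· ∈ A) with hs
  have hscard : s.card = 2 ^ (2 * k) := by
    rw [← hA, Nat.card_eq_fintype_card, Fintype.card_subtype]
  -- pointwise bound
  have key : ∀ y ∈ B, ‖Had (4*k) ψ y‖^2 ≤ ((2:ℝ)^(4*k))⁻¹ * 2^(2*k) := by
    intro y hy
    have hsum : ∑ x, chi (bform x y) * ψ x = ∑ x ∈ s, ψ x := by
      rw [hs, Finset.sum_filter]
      refine Finset.sum_congr rfl fun x _ => ?_
      by_cases hx : x ∈ A
      · simp [hx, chi, hBA y hy x hx]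
      · simp [hx, hsupp x hx]
    have hnn : (0:ℝ) ≤ (Real.sqrt (2 ^ (4*k)))⁻¹ := by positivity
    have h1 : ‖Had (4*k) ψ y‖^2
        = ((2:ℝ)^(4*k))⁻¹ * ‖∑ x ∈ s, ψ x‖^2 := by
      rw [Had, hsum, norm_mul, mul_pow, Complex.norm_real, Real.norm_eq_abs,
        abs_of_nonneg hnn, inv_pow, Real.sq_sqrt (by positivity)]
    rw [h1]
    have h3 : ‖∑ x ∈ s, ψ x‖ ≤ ∑ x ∈ s, ‖ψ x‖ := norm_sum_le _ _
    have h5 : (∑ x ∈ s, ‖ψ x‖)^2 ≤ s.card * ∑ x ∈ s, ‖ψ x‖^2 :=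
      sq_sum_le_card_mul_sum_sq
    have h6 : ∑ x ∈ s, ‖ψ x‖^2 ≤ 1 := by
      rw [← hnorm]
      exact Finset.sum_le_sum_of_subset_of_nonneg (Finset.subset_univ _)
        (fun _ _ _ => by positivity)
    have h7 : ‖∑ x ∈ s, ψ x‖^2 ≤ (2:ℝ)^(2*k) := by
      calc ‖∑ x ∈ s, ψ x‖^2 ≤ (∑ x ∈ s, ‖ψ x‖)^2 := by
            apply pow_le_pow_left₀ (norm_nonneg _) h3
        _ ≤ s.card * ∑ x ∈ s, ‖ψ x‖^2 := h5
        _ ≤ s.card * 1 := by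
            apply mul_le_mul_of_nonneg_left h6 (by positivity)
        _ = (2:ℝ)^(2*k) := by rw [mul_one, hscard]; push_cast; ring
    exact mul_le_mul_of_nonneg_left h7 (by positivity)
  -- sum over B
  rw [Finset.sum_indicator_eq_sum_filter]
  have hcard : (Finset.univ.filter (· ∈ B)).card = 2 ^ k := by
    rw [← hB, Nat.card_eq_fintype_card, Fintype.card_subtype]
  calc ∑ y ∈ Finset.univ.filter (· ∈ B), ‖Had (4*k) ψ y‖^2
      ≤ ∑ y ∈ Finset.univ.filter (· ∈ B), ((2:ℝ)^(4*k))⁻¹ * 2^(2*k) := by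
        refine Finset.sum_le_sum fun y hy => key y (by simpa using hy)
    _ = (2^k : ℝ) * (((2:ℝ)^(4*k))⁻¹ * 2^(2*k)) := by
        rw [Finset.sum_const, hcard, nsmul_eq_mul]; push_cast; ring
    _ = ((2:ℝ)^k)⁻¹ := by
        rw [show 4*k = k + (k + 2*k) by ring, pow_add, pow_add]
        field_simp
end

section
/- Let V be an inner product space over ℂ, let ι be a finite index type, and let b : ι → V be an orthonormal basis of V. Let O and O' be linear isometries (unitaries) of V that agree on all basis vectors outside a subset S ⊆ ι, i.e. O (b i) = O' (b i) for all i ∉ S. Then for every ψ ∈ V, ‖O ψ − O' ψ‖ ≤ 2 · √(Σ_{i∈S} |⟪b i, ψ⟫|²); that is, the disturbance caused by swapping O for O' is at most twice the norm of the component of ψ lying in the span of the basis vectors indexed by S. -/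
/-!
On the span of the basis vectors outside `S` the two unitaries agree, so `O ψ - O' ψ = O φ - O' φ`
where `φ` is the component of `ψ` along the `b i` with `i ∈ S`. The triangle inequality and
unitarity then give `2 ‖φ‖`, and `‖φ‖` is the square root in the bound by Pythagoras.
-/

open scoped InnerProductSpace

theorem Orthonormal.norm_sum_smul {𝕜 E ι : Type*} [RCLike 𝕜] [NormedAddCommGroup E]
    [InnerProductSpace 𝕜 E] {v : ι → E} (hv : Orthonormal 𝕜 v) (c : ι → 𝕜) (s : Finset ι) :
    ‖∑ i ∈ s, c i • v i‖ = √(∑ i ∈ s, ‖c i‖ ^ 2) := by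
  rw [← hv.orthogonalFamily.norm_sum c s, Real.sqrt_sq (norm_nonneg _)]
  simp only [LinearIsometry.toSpanSingleton_apply]

theorem OrthonormalBasis.map_eq_map_sum_of_map_eq_zero {𝕜 E F ι : Type*} [RCLike 𝕜]
    [NormedAddCommGroup E] [InnerProductSpace 𝕜 E] [AddCommMonoid F] [Module 𝕜 F] [Fintype ι]
    (b : OrthonormalBasis ι 𝕜 E) (f : E →ₗ[𝕜] F) (S : Finset ι) (hf : ∀ i ∉ S, f (b i) = 0)
    (x : E) : f x = f (∑ i ∈ S, ⟪b i, x⟫_𝕜 • b i) := by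
  conv_lhs => rw [← b.sum_repr' x]
  rw [map_sum, map_sum]
  refine (Finset.sum_subset (Finset.subset_univ S) fun i _ hi => ?_).symm
  rw [map_smul, hf i hi, smul_zero]

/-- **Abstract query-perturbation bound.** If two unitaries `O, O'` of an inner product
space `V` agree on all vectors of an orthonormal basis `b` outside a subset `S` of the
index set, then for every `ψ`, `‖O ψ − O' ψ‖ ≤ 2 √(∑_{i ∈ S} |⟪b i, ψ⟫|²)`. -/
theorem unitary_swap_disturbance_bound
    {V : Type*} [NormedAddCommGroup V] [InnerProductSpace ℂ V]
    {ι : Type*} [Fintype ι] (b : OrthonormalBasis ι ℂ V)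
    (O O' : V ≃ₗᵢ[ℂ] V) (S : Finset ι)
    (h : ∀ i ∉ S, O (b i) = O' (b i)) (ψ : V) :
    ‖O ψ - O' ψ‖ ≤ 2 * Real.sqrt (∑ i ∈ S, ‖(inner ℂ (b i) ψ : ℂ)‖ ^ 2) := by
  set φ := ∑ i ∈ S, ⟪b i, ψ⟫_ℂ • b i
  have hdiff : O ψ - O' ψ = O φ - O' φ :=
    b.map_eq_map_sum_of_map_eq_zero ((O : V →ₗ[ℂ] V) - (O' : V →ₗ[ℂ] V)) S
      (fun i hi => sub_eq_zero.mpr (h i hi)) ψ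
  calc ‖O ψ - O' ψ‖ = ‖O φ - O' φ‖ := by rw [hdiff]
    _ ≤ ‖O φ‖ + ‖O' φ‖ := norm_sub_le _ _
    _ = 2 * ‖φ‖ := by rw [O.norm_map, O'.norm_map, two_mul]
    _ = 2 * √(∑ i ∈ S, ‖⟪b i, ψ⟫_ℂ‖ ^ 2) := by rw [b.orthonormal.norm_sum_smul]
end
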